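/- Define B_1 = C_2 and B_k = B_{k-1} ≀ C_2 for k > 1, and define G_1 = {e}, G_k = {(g_1,g_2)π ∈ B_k : g_1 g_2 ∈ G_{k-1}} for k > 1. Then the commutator subgroup B_k' is contained in G_k. -/

import Mathlib

/-- The cyclic shift action of `C_p = ZMod p` on the direct power `B^p`. -/
def cycShift (B : Type*) [Group B] (p : ℕ) :
    Multiplicative (ZMod p) →* MulAut (ZMod p → B) where
  toFun k := MulEquiv.arrowCongr (Equiv.addRight (Multiplicative.toAdd k)) (MulEquiv.refl B)
  map_one' := by
    ext f i
    simp [MulEquiv.arrowCongr, Equiv.Perm.one_symm, Equiv.Perm.one_apply]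
  map_mul' a b := by
    ext f i
    simp only [MulEquiv.arrowCongr, Equiv.coe_addRight, MulEquiv.coe_mk, Equiv.coe_fn_mk,
      MulEquiv.refl_apply, toAdd_mul, MulAut.mul_apply]
    congr 1
    simp only [Equiv.addRight_symm, Equiv.coe_addRight]
    abel

/-- The permutational wreath product `B ≀ C_p` with `C_p` acting on `p` points by cyclic shift. -/
abbrev Wr (B : Type*) [Group B] (p : ℕ) : Type _ :=
  (ZMod p → B) ⋊[cycShift B p] Multiplicative (ZMod p)

/-- `BBgrp k` is the group `B_{k+1}`, the `(k+1)`-fold iterated wreath product of `C_2`: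
`BBgrp 0 = C_2` and `BBgrp (k+1) = BBgrp k ≀ C_2`.  It is (isomorphic to) a Sylow
2-subgroup of `S_{2^(k+1)}`. -/
def BBgrp : ℕ → GrpCat
  | 0 => GrpCat.of (Multiplicative (ZMod 2))
  | k + 1 => GrpCat.of (Wr (BBgrp k) 2)

/-- `GGset k` is the subset `G_{k+1}` of `B_{k+1} = BBgrp k`: `GGset 0 = {1}` and
`GGset (k+1) = {(g₁,g₂)π : g₁ * g₂ ∈ GGset k}`. -/
def GGset : (k : ℕ) → Set (BBgrp k)
  | 0 => {1}
  | k + 1 => {x : Wr (BBgrp k) 2 | x.left 0 * x.left 1 ∈ GGset k}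

/-!
Sending an element of `B_k` to the product of the `C_2`-labels on the bottom level of the tree
(forgetting all swaps above it) is a homomorphism to the abelian group `C_2`, so it kills `B_k'`.
Its value at `(g₁,g₂)π` is its value at `g₁ g₂`, so by induction its kernel lies in `G_k`.
-/

namespace Wr

variable {B : Type*} [Group B] {p : ℕ}

lemma left_mul_apply (x y : Wr B p) (i : ZMod p) :
    (x * y).left i = x.left i * y.left (i - Multiplicative.toAdd x.right) := by
  simp [cycShift, MulEquiv.arrowCongr, sub_eq_add_neg]

variable {A : Type*} [CommGroup A] [NeZero p]

def prodLeft (φ : B →* A) : Wr B p →* A where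
  toFun x := ∏ i, φ (x.left i)
  map_one' := by simp
  map_mul' x y := by
    simp only [left_mul_apply, map_mul, Finset.prod_mul_distrib]
    congr 1
    exact Fintype.prod_equiv (Equiv.subRight _) _ _ fun _ => rfl

lemma prodLeft_apply_two (φ : B →* A) (x : Wr B 2) :
    prodLeft φ x = φ (x.left 0 * x.left 1) := by
  rw [map_mul]
  exact Fin.prod_univ_two fun i => φ (x.left i)

end Wr

def bbLeafProd : (k : ℕ) → BBgrp k →* Multiplicative (ZMod 2)
  | 0 => MonoidHom.id _
  | k + 1 => Wr.prodLeft (bbLeafProd k)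

lemma mem_GGset_of_bbLeafProd_eq_one :
    ∀ {k : ℕ} {x : BBgrp k}, bbLeafProd k x = 1 → x ∈ GGset k
  | 0, _, hx => hx
  | k + 1, x, hx =>
    mem_GGset_of_bbLeafProd_eq_one (k := k)
      ((Wr.prodLeft_apply_two (bbLeafProd k) x).symm.trans hx)

/-- the commutator subgroup `B_k'` is contained in `G_k`
(indexing: `BBgrp k` is `B_{k+1}` and `GGset k` is `G_{k+1}`, `k ≥ 0`). -/
theorem commutator_BB_subset_GG (k : ℕ) :
    ((commutator (BBgrp k) : Subgroup (BBgrp k)) : Set (BBgrp k)) ⊆ GGset k :=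
  fun _ hx =>
    mem_GGset_of_bbLeafProd_eq_one (Abelianization.commutator_subset_ker (bbLeafProd k) hx)
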